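/- The set of derivations of the Leibniz algebra L₂₁ is a linear subspace of End(V) of dimension 7; explicitly, a linear map d : V → V is a derivation of L₂₁ if and only if there exist complex numbers a, b, c, m, u, v, w such that d(e₁) = a·e₁ + c·e₂ + u·e₄, d(e₂) = m·e₁ + b·e₂ + v·e₄, d(e₃) = ((a+b)/2)·e₃ + w·e₄, and d(e₄) = (a+b)·e₄. -/
import Mathlib


/-- `V = ℂ⁴`. -/
abbrev V : Type := Fin 4 → ℂ

/-- standard basis: `e 0 = e₁`, ..., `e 3 = e₄`. -/
def e (i : Fin 4) : V := Pi.single i 1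

/-- Bracket of the Leibniz algebra `L₂₁`:
`⟦e₁,e₂⟧ = e₄`, `⟦e₂,e₁⟧ = -e₄`, `⟦e₃,e₃⟧ = e₄`, all other basis products zero. -/
def br (x y : V) : V :=
  (x 0 * y 1 - x 1 * y 0 + x 2 * y 2) • e 3

/-- A derivation. -/
def IsDer (d : V →ₗ[ℂ] V) : Prop :=
  ∀ x y : V, d (br x y) = br (d x) y + br x (d y)

lemma x_eq (x : V) : x = x 0 • e 0 + x 1 • e 1 + x 2 • e 2 + x 3 • e 3 := by
  funext i; fin_cases i <;> simp [e, Pi.single_apply]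

lemma charac (d : V →ₗ[ℂ] V) : IsDer d ↔ ∃ a b c m u v w : ℂ,
      d (e 0) = a • e 0 + c • e 1 + u • e 3 ∧
      d (e 1) = m • e 0 + b • e 1 + v • e 3 ∧
      d (e 2) = ((a + b) / 2) • e 2 + w • e 3 ∧
      d (e 3) = (a + b) • e 3 := by
  constructor
  · intro h
    refine ⟨d (e 0) 0, d (e 1) 1, d (e 0) 1, d (e 1) 0, d (e 0) 3, d (e 1) 3, d (e 2) 3,
      ?_, ?_, ?_, ?_⟩
    · have h02 := congrFun (h (e 0) (e 2)) 3
      have h20 := congrFun (h (e 2) (e 0)) 3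
      simp [br, e, Pi.single_apply] at h02 h20
      funext i; fin_cases i <;> simp [e, Pi.single_apply] <;>
        linear_combination (-h02 - h20)/2
    · have h12 := congrFun (h (e 1) (e 2)) 3
      have h21 := congrFun (h (e 2) (e 1)) 3
      simp [br, e, Pi.single_apply] at h12 h21
      funext i; fin_cases i <;> simp [e, Pi.single_apply] <;>
        linear_combination (-h12 - h21)/2
    · have h12 := congrFun (h (e 1) (e 2)) 3
      have h21 := congrFun (h (e 2) (e 1)) 3
      have h02 := congrFun (h (e 0) (e 2)) 3
      have h20 := congrFun (h (e 2) (e 0)) 3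
      have h22 := congrFun (h (e 2) (e 2)) 3
      have h01 := congrFun (h (e 0) (e 1)) 3
      simp [br, e, Pi.single_apply] at h12 h21 h02 h20 h22 h01
      funext i; fin_cases i <;> simp [e, Pi.single_apply]
      · linear_combination (h12 - h21)/2
      · linear_combination (h20 - h02)/2
      · linear_combination (h01 - h22)/2
    · have h01 := h (e 0) (e 1)
      have hbr : br (e 0) (e 1) = e 3 := by
        funext i; fin_cases i <;> simp [br, e, Pi.single_apply]
      rw [hbr] at h01
      rw [h01]
      funext i; fin_cases i <;> simp [br, e, Pi.single_apply] <;> ring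
  · rintro ⟨a, b, c, m, u, v, w, h0, h1, h2, h3⟩
    intro x y
    have hdx : ∀ z : V, d z = z 0 • (a • e 0 + c • e 1 + u • e 3)
        + z 1 • (m • e 0 + b • e 1 + v • e 3)
        + z 2 • (((a + b) / 2) • e 2 + w • e 3)
        + z 3 • ((a + b) • e 3) := by
      intro z
      conv_lhs => rw [x_eq z]
      simp [h0, h1, h2, h3]
    have hx0 : d x 0 = a * x 0 + m * x 1 := by
      rw [hdx x]; simp [e, Pi.single_apply]; ring
    have hx1 : d x 1 = c * x 0 + b * x 1 := by
      rw [hdx x]; simp [e, Pi.single_apply]; ring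
    have hx2 : d x 2 = (a + b) / 2 * x 2 := by
      rw [hdx x]; simp [e, Pi.single_apply]; ring
    have hy0 : d y 0 = a * y 0 + m * y 1 := by
      rw [hdx y]; simp [e, Pi.single_apply]; ring
    have hy1 : d y 1 = c * y 0 + b * y 1 := by
      rw [hdx y]; simp [e, Pi.single_apply]; ring
    have hy2 : d y 2 = (a + b) / 2 * y 2 := by
      rw [hdx y]; simp [e, Pi.single_apply]; ring
    have hL : d (br x y) = (x 0 * y 1 - x 1 * y 0 + x 2 * y 2) • ((a + b) • e 3) := by
      rw [br, map_smul, h3]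
    rw [hL]
    funext i
    fin_cases i <;> simp [br, e, Pi.single_apply, hx0, hx1, hx2, hy0, hy1, hy2] <;> ring

noncomputable def Dmap (a b c m u v w : ℂ) : V →ₗ[ℂ] V where
  toFun x := ![a * x 0 + m * x 1, c * x 0 + b * x 1, (a + b) / 2 * x 2,
    u * x 0 + v * x 1 + w * x 2 + (a + b) * x 3]
  map_add' x y := by funext i; fin_cases i <;> simp <;> ring
  map_smul' s x := by funext i; fin_cases i <;> simp <;> ring

lemma Dmap_apply (a b c m u v w : ℂ) (x : V) :
    Dmap a b c m u v w x = ![a * x 0 + m * x 1, c * x 0 + b * x 1, (a + b) / 2 * x 2,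
      u * x 0 + v * x 1 + w * x 2 + (a + b) * x 3] := rfl

noncomputable def pr : (V →ₗ[ℂ] V) →ₗ[ℂ] (Fin 7 → ℂ) where
  toFun d := ![d (e 0) 0, d (e 1) 1, d (e 0) 1, d (e 1) 0, d (e 0) 3, d (e 1) 3, d (e 2) 3]
  map_add' f g := by funext i; fin_cases i <;> rfl
  map_smul' s f := by funext i; fin_cases i <;> rfl

lemma pr_apply (d : V →ₗ[ℂ] V) :
    pr d = ![d (e 0) 0, d (e 1) 1, d (e 0) 1, d (e 1) 0, d (e 0) 3, d (e 1) 3, d (e 2) 3] := rfl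

noncomputable def Sder : Submodule ℂ (V →ₗ[ℂ] V) where
  carrier := {d | IsDer d}
  zero_mem' := by intro x y; simp [br]
  add_mem' := by
    intro f g hf hg x y
    have hf' := hf x y
    have hg' := hg x y
    simp only [LinearMap.add_apply, hf', hg']
    funext i; fin_cases i <;> simp [br, e, Pi.single_apply] <;> ring
  smul_mem' := by
    intro s f hf x y
    have hf' := hf x y
    simp only [LinearMap.smul_apply, hf']
    funext i; fin_cases i <;> simp [br, e, Pi.single_apply] <;> ring

lemma ext0 (f : V →ₗ[ℂ] V) (h : ∀ i, f (e i) = 0) : f = 0 := by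
  apply LinearMap.ext
  intro x
  conv_lhs => rw [x_eq x]
  simp [h]

theorem derivations_of_L21 :
    (∃ S : Submodule ℂ (V →ₗ[ℂ] V),
      (S : Set (V →ₗ[ℂ] V)) = {d | IsDer d} ∧ Module.finrank ℂ S = 7) ∧
    (∀ d : V →ₗ[ℂ] V, IsDer d ↔ ∃ a b c m u v w : ℂ,
      d (e 0) = a • e 0 + c • e 1 + u • e 3 ∧
      d (e 1) = m • e 0 + b • e 1 + v • e 3 ∧
      d (e 2) = ((a + b) / 2) • e 2 + w • e 3 ∧
      d (e 3) = (a + b) • e 3) := by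
  constructor
  · refine ⟨Sder, rfl, ?_⟩
    have hbij : Function.Bijective (pr ∘ₗ Sder.subtype) := by
      constructor
      · have hker : ∀ z : Sder, (pr ∘ₗ Sder.subtype) z = 0 → z = 0 := by
          rintro ⟨d, hd⟩ hpd
          have hpd' : pr d = 0 := hpd
          rw [pr_apply] at hpd'
          have h0 : d (e 0) 0 = 0 := congrFun hpd' 0
          have h1 : d (e 1) 1 = 0 := congrFun hpd' 1
          have h2 : d (e 0) 1 = 0 := congrFun hpd' 2
          have h3 : d (e 1) 0 = 0 := congrFun hpd' 3
          have h4 : d (e 0) 3 = 0 := congrFun hpd' 4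
          have h5 : d (e 1) 3 = 0 := congrFun hpd' 5
          have h6 : d (e 2) 3 = 0 := congrFun hpd' 6
          obtain ⟨a, b, c, m, u, v, w, g0, g1, g2, g3⟩ := (charac d).1 hd
          have ha : a = d (e 0) 0 := by rw [g0]; simp [e, Pi.single_apply]
          have hb : b = d (e 1) 1 := by rw [g1]; simp [e, Pi.single_apply]
          have hc : c = d (e 0) 1 := by rw [g0]; simp [e, Pi.single_apply]
          have hm : m = d (e 1) 0 := by rw [g1]; simp [e, Pi.single_apply]
          have hu : u = d (e 0) 3 := by rw [g0]; simp [e, Pi.single_apply]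
          have hv : v = d (e 1) 3 := by rw [g1]; simp [e, Pi.single_apply]
          have hw : w = d (e 2) 3 := by rw [g2]; simp [e, Pi.single_apply]
          have hd0 : d = 0 := by
            apply ext0
            intro i
            fin_cases i
            · show d (e 0) = 0; rw [g0, ha, hc, hu, h0, h2, h4]; simp
            · show d (e 1) = 0; rw [g1, hm, hb, hv, h3, h1, h5]; simp
            · show d (e 2) = 0; rw [g2, ha, hb, hw, h0, h1, h6]; simp
            · show d (e 3) = 0; rw [g3, ha, hb, h0, h1]; simp
          exact Subtype.ext hd0
        intro z1 z2 hz
        have hsub : z1 - z2 = 0 := hker _ (by rw [map_sub _ z1 z2, hz, sub_self])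
        exact sub_eq_zero.mp hsub
      · intro p
        have hder : IsDer (Dmap (p 0) (p 1) (p 2) (p 3) (p 4) (p 5) (p 6)) := by
          rw [charac]
          refine ⟨p 0, p 1, p 2, p 3, p 4, p 5, p 6, ?_, ?_, ?_, ?_⟩ <;>
            (rw [Dmap_apply]; funext i; fin_cases i <;> simp [e, Pi.single_apply])
        refine ⟨⟨Dmap (p 0) (p 1) (p 2) (p 3) (p 4) (p 5) (p 6), hder⟩, ?_⟩
        have : pr (Dmap (p 0) (p 1) (p 2) (p 3) (p 4) (p 5) (p 6)) = p := by
          rw [pr_apply]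
          funext i
          fin_cases i <;> simp [Dmap_apply, e, Pi.single_apply] <;> rfl
        exact this
    have e7 : Sder ≃ₗ[ℂ] (Fin 7 → ℂ) := LinearEquiv.ofBijective _ hbij
    rw [e7.finrank_eq]
    simp
  · exact charac
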